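/- Induction step for even positions: suppose E_L(e_k) = 2^L − k for a given k ∈ {0,…,2^L−1}. For the (L+1)-layer network, if x = e_{2k} ∈ ℝ^{2^{L+1}}, then the first layer output is 2·e_k, and hence E_{L+1}(e_{2k}) = 2·(2^L − k) = 2^{L+1} − 2k. -/

import Mathlib

/-- One layer of the position-encoding network: convolution with the filter
`(1, 2, 1)` followed by subsampling by 2, out-of-range indices treated as `0`
(vectors are modelled as functions `ℕ → ℝ`; index `2t − 1` is out of range for `t = 0`). -/
noncomputable def posLayer (u : ℕ → ℝ) : ℕ → ℝ := fun t =>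
  (if t = 0 then 0 else u (2 * t - 1)) + 2 * u (2 * t) + u (2 * t + 1)

/-- The `L`-layer position-encoding network `E_L`: the `L`-fold composition of `posLayer`. -/
noncomputable def posEnc : ℕ → (ℕ → ℝ) → (ℕ → ℝ)
  | 0, u => u
  | L + 1, u => posEnc L (posLayer u)

/-- The one-hot vector `e_a` (positions indexed from `0`). -/
noncomputable def oneHot (a : ℕ) : ℕ → ℝ := fun i => if i = a then 1 else 0

lemma posLayer_smul (c : ℝ) (u : ℕ → ℝ) : posLayer (c • u) = c • posLayer u := by
  funext t
  simp only [posLayer, Pi.smul_apply, smul_eq_mul]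
  split_ifs <;> ring

lemma posEnc_smul (L : ℕ) (c : ℝ) (u : ℕ → ℝ) : posEnc L (c • u) = c • posEnc L u := by
  induction L generalizing u with
  | zero => rfl
  | succ L ih => simp only [posEnc, posLayer_smul, ih]

/-- The neighbours `2t ± 1` are odd, so only the centre tap of the filter sees `e_{2k}`. -/
lemma posLayer_oneHot_two_mul (k : ℕ) : posLayer (oneHot (2 * k)) = (2 : ℝ) • oneHot k := by
  funext t
  have hodd : 2 * t + 1 ≠ 2 * k := by omega
  have heven : 2 * t = 2 * k ↔ t = k := by omega
  simp only [posLayer, oneHot, Pi.smul_apply, smul_eq_mul, hodd, heven, if_false, add_zero]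
  split_ifs <;> first | omega | simp

theorem posEnc_induction_even_general (L k : ℕ)
    (hIH : posEnc L (oneHot k) 0 = (2 ^ L : ℝ) - k) :
    (∀ t, t < 2 ^ L → posLayer (oneHot (2 * k)) t = 2 * oneHot k t) ∧
    posEnc (L + 1) (oneHot (2 * k)) 0 = (2 ^ (L + 1) : ℝ) - 2 * k := by
  refine ⟨fun t _ => by rw [posLayer_oneHot_two_mul]; rfl, ?_⟩
  rw [posEnc, posLayer_oneHot_two_mul, posEnc_smul, Pi.smul_apply, hIH, smul_eq_mul]
  ring

/-- Induction step for even positions: if `E_L(e_k) = 2^L − k`, then for the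
`(L+1)`-layer network with input `e_{2k} ∈ ℝ^{2^{L+1}}`, the first-layer output is
`2·e_k` (on the valid index range), and hence `E_{L+1}(e_{2k}) = 2^{L+1} − 2k`. -/
theorem posEnc_induction_even (L k : ℕ) (hk : k < 2 ^ L)
    (hIH : posEnc L (oneHot k) 0 = (2 ^ L : ℝ) - k) :
    (∀ t, t < 2 ^ L → posLayer (oneHot (2 * k)) t = 2 * oneHot k t) ∧
    posEnc (L + 1) (oneHot (2 * k)) 0 = (2 ^ (L + 1) : ℝ) - 2 * k :=
  posEnc_induction_even_general L k hIH
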